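/- Let E ⊆ ∂T have positive p-capacity and suppose E ⊆ ∂T_α for a non-root edge α. Then the p-capacity of E computed in the subtree T_α rooted at α is strictly larger than its p-capacity in T: c_{p,α}(E) > c_p(E). -/

import Mathlib

open scoped ENNReal
open MeasureTheory

/-- A locally finite rooted tree, given by its set of edges. The root edge has no parent,
every other edge has a parent, and every edge has finitely many children. -/
structure RTree where
  E : Type
  root : E
  parent : E → Option E
  parent_root : parent root = none
  parent_isSome : ∀ α, α ≠ root → (parent α).isSome
  level : E → ℕ
  level_root : level root = 0
  level_parent : ∀ α β, parent α = some β → level α = level β + 1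
  locFin : ∀ α, {β | parent β = some α}.Finite

namespace RTree

variable (T : RTree)

/-- `Le T α β` : the edge `α` is an ancestor of (or equal to) the edge `β`,
i.e. `α ≤ β` in the natural partial order on edges. -/
def Le (α β : T.E) : Prop :=
  Relation.ReflTransGen (fun x y => T.parent y = some x) α β

/-- The boundary of `T`: half-infinite geodesics starting at the root edge. -/
structure Boundary where
  seq : ℕ → T.E
  seq_zero : seq 0 = T.root
  seq_parent : ∀ n, T.parent (seq (n + 1)) = some (seq n)

/-- The boundary `∂T_α` of the tent over the edge `α`: boundary points whose
geodesic passes through `α`. -/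
def tentB (α : T.E) : Set T.Boundary := {ζ | ∃ n, ζ.seq n = α}

/-- The standard topology on the boundary, with the tent boundaries as a basis. -/
def ttop : TopologicalSpace T.Boundary :=
  TopologicalSpace.generateFrom {s | ∃ α, s = T.tentB α}

/-- The Borel σ-algebra on the boundary. -/
def tborel : MeasurableSpace T.Boundary := @borel _ T.ttop

/-- The set of edges of the tent `T_α`. -/
def tentE (α : T.E) : Set T.E := {β | T.Le α β}

/-- The relative potential `I_α f (ζ)`, summing `f` over the edges of the geodesic
from the root to `ζ` that lie in the tent `T_α`.  Taking `α` to be the root edge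
gives the potential `If`. -/
noncomputable def relPot (α : T.E) (f : T.E → ℝ≥0∞) (ζ : T.Boundary) : ℝ≥0∞ :=
  ∑' n, Set.indicator (T.tentE α) f (ζ.seq n)

/-- The relative `p`-energy `‖f‖_{ℓ^p(E(T_α))}^p`. -/
noncomputable def relEnergy (p : ℝ) (α : T.E) (f : T.E → ℝ≥0∞) : ℝ≥0∞ :=
  ∑' β, Set.indicator (T.tentE α) (fun γ => f γ ^ p) β

/-- The relative `p`-capacity `c_{p,α}(E)` of `E ⊆ ∂T`, with the tent `T_α`
as ambient tree. -/
noncomputable def relCap (p : ℝ) (α : T.E) (E : Set T.Boundary) : ℝ≥0∞ :=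
  ⨅ f ∈ {f : T.E → ℝ≥0∞ | ∀ ζ ∈ E, 1 ≤ T.relPot α f ζ}, T.relEnergy p α f

/-- The `p`-capacity of a subset of the boundary. -/
noncomputable def cap (p : ℝ) (E : Set T.Boundary) : ℝ≥0∞ := T.relCap p T.root E

end RTree

open RTree

/-! Extending a function `f` admissible for `c_{p,α}(E)` by the value `t` on the root edge and
scaling it by `1 - t` on `T_α` gives a function admissible for `c_p(E)`, so
`c_p(E) ≤ t^p + (1 - t)^p c_{p,α}(E)` for `0 ≤ t ≤ 1`. As `p > 1`, the right-hand side has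
derivative `-p c_{p,α}(E) < 0` at `t = 0`, hence drops strictly below `c_{p,α}(E)` for small `t > 0`.
-/

namespace RTree

variable (T : RTree)

lemma level_seq (ζ : T.Boundary) : ∀ n, T.level (ζ.seq n) = n
  | 0 => by rw [ζ.seq_zero, T.level_root]
  | n + 1 => by rw [T.level_parent _ _ (ζ.seq_parent n), level_seq ζ n]

lemma seq_ne_root (ζ : T.Boundary) {n : ℕ} (hn : n ≠ 0) : ζ.seq n ≠ T.root := by
  intro h
  have := T.level_seq ζ n
  rw [h, T.level_root] at this
  exact hn this.symm

lemma eq_root_of_level_eq_zero {β : T.E} (h : T.level β = 0) : β = T.root := by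
  by_contra hβ
  obtain ⟨γ, hγ⟩ := Option.isSome_iff_exists.mp (T.parent_isSome β hβ)
  rw [T.level_parent β γ hγ] at h
  omega

lemma level_le_level_of_le {α β : T.E} (h : T.Le α β) : T.level α ≤ T.level β := by
  induction h with
  | refl => exact le_rfl
  | tail _ hparent ih => rw [T.level_parent _ _ hparent]; omega

lemma root_le (β : T.E) : T.Le T.root β := by
  induction hn : T.level β generalizing β with
  | zero => rw [T.eq_root_of_level_eq_zero hn]; exact .refl
  | succ n ih =>
    have hβ : β ≠ T.root := fun h => by simp [h, T.level_root] at hn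
    obtain ⟨γ, hγ⟩ := Option.isSome_iff_exists.mp (T.parent_isSome β hβ)
    exact (ih γ (by have := T.level_parent β γ hγ; omega)).tail hγ

lemma root_notMem_tentE {α : T.E} (hα : α ≠ T.root) : T.root ∉ T.tentE α := fun h =>
  hα <| T.eq_root_of_level_eq_zero <| Nat.le_zero.mp <| T.level_root ▸ T.level_le_level_of_le h

lemma tentE_root : T.tentE T.root = Set.univ :=
  Set.eq_univ_of_forall T.root_le

lemma relPot_root (f : T.E → ℝ≥0∞) (ζ : T.Boundary) :
    T.relPot T.root f ζ = ∑' n, f (ζ.seq n) := by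
  simp [relPot, T.tentE_root]

lemma relEnergy_root (p : ℝ) (f : T.E → ℝ≥0∞) :
    T.relEnergy p T.root f = ∑' β, f β ^ p := by
  simp [relEnergy, T.tentE_root]

open Classical in
noncomputable def rootExtension (α : T.E) (c d : ℝ≥0∞) (f : T.E → ℝ≥0∞) (β : T.E) : ℝ≥0∞ :=
  if β = T.root then c else d * (T.tentE α).indicator f β

variable {T}

lemma relPot_root_rootExtension {α : T.E} (hα : α ≠ T.root) (c d : ℝ≥0∞)
    (f : T.E → ℝ≥0∞) (ζ : T.Boundary) :
    T.relPot T.root (T.rootExtension α c d f) ζ = c + d * T.relPot α f ζ := by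
  have hterm : ∀ n, T.rootExtension α c d f (ζ.seq n) =
      (if n = 0 then c else 0) + d * (T.tentE α).indicator f (ζ.seq n) := by
    rintro (_ | n)
    · simp [rootExtension, ζ.seq_zero, Set.indicator_of_notMem (T.root_notMem_tentE hα)]
    · simp [rootExtension, T.seq_ne_root ζ n.succ_ne_zero]
  rw [T.relPot_root, tsum_congr hterm, ENNReal.tsum_add, ENNReal.tsum_mul_left, tsum_ite_eq]
  rfl

lemma relEnergy_root_rootExtension {p : ℝ} (hp : 0 < p) {α : T.E} (hα : α ≠ T.root)
    (c d : ℝ≥0∞) (f : T.E → ℝ≥0∞) :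
    T.relEnergy p T.root (T.rootExtension α c d f) = c ^ p + d ^ p * T.relEnergy p α f := by
  classical
  have hterm : ∀ β, T.rootExtension α c d f β ^ p =
      (if β = T.root then c ^ p else 0) + d ^ p * (T.tentE α).indicator (fun γ => f γ ^ p) β := by
    intro β
    by_cases hβ : β = T.root
    · simp [rootExtension, hβ, Set.indicator_of_notMem (T.root_notMem_tentE hα)]
    by_cases hβα : β ∈ T.tentE α
    · simp [rootExtension, hβ, hβα, ENNReal.mul_rpow_of_nonneg _ _ hp.le]
    · simp [rootExtension, hβ, hβα, ENNReal.zero_rpow_of_pos hp]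
  rw [T.relEnergy_root, tsum_congr hterm, ENNReal.tsum_add, ENNReal.tsum_mul_left, tsum_ite_eq]
  rfl

lemma cap_le_rpow_add_rpow_mul_relEnergy {p : ℝ} (hp : 0 < p) {α : T.E} (hα : α ≠ T.root)
    {E : Set T.Boundary} {c d : ℝ≥0∞} {f : T.E → ℝ≥0∞}
    (hf : ∀ ζ ∈ E, 1 ≤ c + d * T.relPot α f ζ) :
    T.cap p E ≤ c ^ p + d ^ p * T.relEnergy p α f := by
  rw [← T.relEnergy_root_rootExtension hp hα]
  refine iInf₂_le _ fun ζ hζ => ?_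
  rw [T.relPot_root_rootExtension hα]
  exact hf ζ hζ

lemma cap_le_rpow_add_rpow_mul_relCap {p : ℝ} (hp : 0 < p) {α : T.E} (hα : α ≠ T.root)
    (E : Set T.Boundary) {c d : ℝ≥0∞} (hcd : 1 ≤ c + d) (hd₀ : d ≠ 0) (hd : d ≠ ∞) :
    T.cap p E ≤ c ^ p + d ^ p * T.relCap p α E := by
  have hdp₀ : d ^ p ≠ 0 := (ENNReal.rpow_pos (pos_iff_ne_zero.mpr hd₀) hd).ne'
  have hdp : d ^ p ≠ ∞ := ENNReal.rpow_ne_top_of_nonneg hp.le hd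
  simp only [relCap, ENNReal.mul_iInf_of_ne hdp₀ hdp, ENNReal.add_iInf]
  refine le_iInf₂ fun f hf => T.cap_le_rpow_add_rpow_mul_relEnergy hp hα fun ζ hζ => ?_
  calc 1 ≤ c + d := hcd
    _ ≤ c + d * T.relPot α f ζ := by gcongr; exact le_mul_of_one_le_right' (hf ζ hζ)

end RTree

lemma exists_rpow_add_one_sub_rpow_mul_lt {p m : ℝ} (hp : 1 < p) (hm : 0 < m) :
    ∃ t : ℝ, 0 < t ∧ t < 1 ∧ t ^ p + (1 - t) ^ p * m < m := by
  have hlim : Filter.Tendsto (fun t : ℝ => t ^ (p - 1)) (nhds 0) (nhds 0) := by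
    simpa [Real.zero_rpow (by linarith : p - 1 ≠ 0)] using
      (Real.continuousAt_rpow_const 0 (p - 1) (Or.inr (by linarith))).tendsto
  obtain ⟨t, htm, ht0, ht1⟩ := ((hlim.eventually (gt_mem_nhds hm)).filter_mono
    nhdsWithin_le_nhds |>.and (Ioo_mem_nhdsGT one_pos)).exists
  refine ⟨t, ht0, ht1, ?_⟩
  have hsmall : t ^ p < t * m := by
    calc t ^ p = t * t ^ (p - 1) := by
          rw [← Real.rpow_one_add' ht0.le (by linarith), add_sub_cancel]
      _ < t * m := by gcongr
  have hconvex : (1 - t) ^ p ≤ 1 - t := by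
    simpa using Real.rpow_le_rpow_of_exponent_ge (by linarith) (by linarith) hp.le
  nlinarith

theorem stmt13_general (T : RTree) (p : ℝ) (hp : 1 < p) (α : T.E) (hα : α ≠ T.root)
    (E : Set T.Boundary) (hpos : 0 < T.cap p E) :
    T.cap p E < T.relCap p α E := by
  have hp₀ : 0 < p := by linarith
  have hle : T.cap p E ≤ T.relCap p α E := by
    simpa [ENNReal.zero_rpow_of_pos hp₀] using
      T.cap_le_rpow_add_rpow_mul_relCap hp₀ hα E (c := 0) (d := 1) (by simp) one_ne_zero
        ENNReal.one_ne_top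
  rcases eq_or_ne (T.relCap p α E) ∞ with htop | hfin
  · have hcap : T.cap p E ≤ 1 := by
      simpa [ENNReal.zero_rpow_of_pos hp₀] using
        T.cap_le_rpow_add_rpow_mul_relEnergy hp₀ hα (E := E) (c := 1) (d := 0) (f := 0)
          (by simp)
    rw [htop]
    exact hcap.trans_lt ENNReal.one_lt_top
  have hm : 0 < (T.relCap p α E).toReal := ENNReal.toReal_pos (hpos.trans_le hle).ne' hfin
  obtain ⟨t, ht₀, ht₁, hlt⟩ := exists_rpow_add_one_sub_rpow_mul_lt hp hm
  calc T.cap p E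
      ≤ ENNReal.ofReal t ^ p + ENNReal.ofReal (1 - t) ^ p * T.relCap p α E :=
        T.cap_le_rpow_add_rpow_mul_relCap hp₀ hα E
          (by rw [← ENNReal.ofReal_add ht₀.le (by linarith)]; simp)
          (by simpa using ht₁) ENNReal.ofReal_ne_top
    _ = ENNReal.ofReal (t ^ p + (1 - t) ^ p * (T.relCap p α E).toReal) := by
        rw [ENNReal.ofReal_add (by positivity) (by positivity), ENNReal.ofReal_mul (by positivity),
          ENNReal.ofReal_rpow_of_pos ht₀, ENNReal.ofReal_rpow_of_pos (by linarith),
          ENNReal.ofReal_toReal hfin]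
    _ < ENNReal.ofReal (T.relCap p α E).toReal :=
        (ENNReal.ofReal_lt_ofReal_iff hm).mpr hlt
    _ = T.relCap p α E := ENNReal.ofReal_toReal hfin

/-- If `E ⊆ ∂T_α` has positive `p`-capacity and `α` is a non-root edge, then the
`p`-capacity of `E` computed in the tent `T_α` (rooted at `α`) is strictly larger
than its `p`-capacity in `T`: `c_p(E) < c_{p,α}(E)`. -/
theorem stmt13 (T : RTree) (p : ℝ) (hp : 1 < p) (α : T.E) (hα : α ≠ T.root)
    (E : Set T.Boundary) (hE : E ⊆ T.tentB α) (hpos : 0 < T.cap p E) :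
    T.cap p E < T.relCap p α E :=
  stmt13_general T p hp α hα E hpos
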